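/- arXiv:1906.01208 — 3 statements merged into one kernel-verified Lean document; each statement's English description precedes it below -/
import Mathlib

section
/- There exist a probability space, a right-continuous filtration 𝔽, and two point processes Y, Z with ΔYΔZ = 0 identically, whose compensators Yᵖ, Zᵖ have a common jump, i.e., ΔYᵖ_t ΔZᵖ_t ≠ 0 for some t with positive probability. Concretely: let ℱ_t be trivial for t < 1 and ℱ_t = ℱ for t ≥ 1, let A, B ∈ ℱ be disjoint events with ℙ[A] > 0 and ℙ[B] > 0, and set Y_t = 1_A 1_{t≥1}, Z_t = 1_B 1_{t≥1}; then Yᵖ_t = ℙ[A] 1_{t≥1} and Zᵖ_t = ℙ[B] 1_{t≥1}, which jump together at t = 1. -/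
open Function Set MeasureTheory Filter
open scoped NNReal ENNReal

variable {Ω : Type*}

/-- Jump of an `ℕ`-valued path: `ΔX_t = X_t - X_{t-}`. -/
noncomputable def jmpN (f : ℝ≥0 → ℕ) (t : ℝ≥0) : ℕ := f t - Function.leftLim f t

/-- Jump of a real-valued path: `ΔA_t = A_t - A_{t-}`. -/
noncomputable def jmpR (f : ℝ≥0 → ℝ) (t : ℝ≥0) : ℝ := f t - Function.leftLim f t

/-- Pathwise covariation `[f,g]_t = ∑_{s≤t} Δf_s Δg_s` of two finite-variation paths. -/
noncomputable def brR (f g : ℝ≥0 → ℝ) (t : ℝ≥0) : ℝ :=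
  ∑ᶠ s ∈ Set.Iic t, jmpR f s * jmpR g s

/-- A point process with respect to the filtration `F`: an `ℕ`-valued adapted
increasing càdlàg process starting at `0` with jumps in `{0,1}`. -/
structure IsPointProc {mΩ : MeasurableSpace Ω} (F : Filtration ℝ≥0 mΩ)
    (X : ℝ≥0 → Ω → ℕ) : Prop where
  adapted : ∀ t : ℝ≥0, Measurable[F t] (X t)
  mono : ∀ ω, Monotone fun t => X t ω
  zero : ∀ ω, X 0 ω = 0
  rightCont : ∀ ω (t : ℝ≥0), ContinuousWithinAt (fun u => X u ω) (Set.Ici t) t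
  jumps : ∀ ω (t : ℝ≥0), jmpN (fun u => X u ω) t ≤ 1

/-- Local martingale: there is a localizing sequence of finite stopping times,
tending to infinity, along which the stopped process is a martingale. -/
def IsLocalMartingale {mΩ : MeasurableSpace Ω} (μ : Measure Ω)
    (F : Filtration ℝ≥0 mΩ) (M : ℝ≥0 → Ω → ℝ) : Prop :=
  ∃ τ : ℕ → Ω → ℝ≥0,
    (∀ n, IsStoppingTime F (fun ω => ((τ n ω : ℝ≥0) : WithTop ℝ≥0))) ∧
    (∀ ω, Tendsto (fun n => τ n ω) atTop atTop) ∧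
    (∀ n, Martingale (fun t ω => M (min t (τ n ω)) ω) F μ)

/-- The predictable σ-algebra on `ℝ≥0 × Ω` associated with the filtration `F`,
generated by the stochastic intervals `(s,t] × A`, `A ∈ F s`, and `{0} × A`, `A ∈ F 0`. -/
def predictableSigma {mΩ : MeasurableSpace Ω} (F : Filtration ℝ≥0 mΩ) :
    MeasurableSpace (ℝ≥0 × Ω) :=
  MeasurableSpace.generateFrom
    ({C | ∃ (s t : ℝ≥0) (A : Set Ω), s < t ∧ MeasurableSet[F s] A ∧ C = Set.Ioc s t ×ˢ A} ∪
     {C | ∃ A : Set Ω, MeasurableSet[F 0] A ∧ C = ({0} : Set ℝ≥0) ×ˢ A})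

/-- A process is predictable if it is measurable for the predictable σ-algebra. -/
def IsPredictable {mΩ : MeasurableSpace Ω} (F : Filtration ℝ≥0 mΩ)
    (M : ℝ≥0 → Ω → ℝ) : Prop :=
  Measurable[predictableSigma F] fun p : ℝ≥0 × Ω => M p.1 p.2

/-- `C` is the compensator (dual predictable projection) of the increasing process `A`:
`C` is predictable, increasing, càdlàg, starts at `0`, and `A - C` is a local martingale. -/
structure IsCompensatorOf {mΩ : MeasurableSpace Ω} (μ : Measure Ω)
    (F : Filtration ℝ≥0 mΩ) (C : ℝ≥0 → Ω → ℝ) (A : ℝ≥0 → Ω → ℝ) : Prop where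
  predictable : _root_.IsPredictable F C
  mono : ∀ ω, Monotone fun t => C t ω
  zero : ∀ ω, C 0 ω = 0
  rightCont : ∀ ω (t : ℝ≥0), ContinuousWithinAt (fun u => C u ω) (Set.Ici t) t
  locmart : IsLocalMartingale μ F fun t ω => A t ω - C t ω

open Classical

/-! Take the filtration that is trivial before a time `c > 0` and everything from `c` on. The time
of the jump of `1_A 1_{t ≥ c}` is then known in advance, but not whether it happens, so its
compensator is the deterministic step `ℙ[A] 1_{t ≥ c}`. For disjoint `A` and `B` the two point
processes never jump together, yet both compensators jump at `c`. -/

open Topology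

section StepFunction

variable {α β : Type*} [TopologicalSpace α] [LinearOrder α] [OrderTopology α] [TopologicalSpace β]

theorem continuousWithinAt_Ici_ite_le (c : α) (a b : β) (t : α) :
    ContinuousWithinAt (fun u => if c ≤ u then a else b) (Ici t) t := by
  rcases le_or_gt c t with h | h
  · exact continuousWithinAt_const.congr_of_eventuallyEq
      (eventually_nhdsWithin_of_forall fun u hu => if_pos (h.trans hu)) (if_pos h)
  · exact continuousWithinAt_const.congr_of_eventuallyEq
      (eventually_nhdsWithin_of_eventually_nhds <|
        (eventually_lt_nhds h).mono fun u hu => if_neg hu.not_ge) (if_neg h.not_ge)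

theorem leftLim_ite_le_self [T2Space β] {c : α} [(𝓝[<] c).NeBot] (a b : β) :
    leftLim (fun u => if c ≤ u then a else b) c = b :=
  leftLim_eq_of_tendsto <| tendsto_const_nhds.congr' <|
    eventually_nhdsWithin_of_forall fun _ hu => (if_neg (not_le.2 hu)).symm

end StepFunction

theorem jmpR_ite_le_self {c : ℝ≥0} (hc : 0 < c) (a : ℝ) :
    jmpR (fun u => if c ≤ u then a else 0) c = a := by
  have := nhdsLT_neBot_of_exists_lt ⟨0, hc⟩
  simp [jmpR, leftLim_ite_le_self]

theorem jmpN_eq_zero_of_eq_zero {f : ℝ≥0 → ℕ} {t : ℝ≥0} (h : f t = 0) : jmpN f t = 0 := by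
  simp [jmpN, h]

theorem jmpN_mul_jmpN_eq_zero_of_disjoint {A B : Set Ω} (hAB : Disjoint A B) (c : ℝ≥0)
    (ω : Ω) (t : ℝ≥0) :
    jmpN (fun u => if ω ∈ A ∧ c ≤ u then 1 else 0) t *
      jmpN (fun u => if ω ∈ B ∧ c ≤ u then 1 else 0) t = 0 := by
  by_cases hω : ω ∈ A
  · rw [jmpN_eq_zero_of_eq_zero (f := fun u => if ω ∈ B ∧ c ≤ u then 1 else 0)
      (if_neg fun h => hAB.notMem_of_mem_left hω h.1), mul_zero]
  · rw [jmpN_eq_zero_of_eq_zero (if_neg fun h => hω h.1), zero_mul]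

section Predictable

variable {mΩ : MeasurableSpace Ω} (F : Filtration ℝ≥0 mΩ)

theorem measurableSet_predictableSigma_Ioi_prod {s : ℝ≥0} {A : Set Ω}
    (hA : MeasurableSet[F s] A) : MeasurableSet[predictableSigma F] (Ioi s ×ˢ A) := by
  have hIoi : Ioi s = ⋃ n : ℕ, Ioc s (s + n + 1) := by
    ext t
    simp only [mem_Ioi, mem_iUnion, mem_Ioc]
    refine ⟨fun hst => ?_, fun ⟨_, hst, _⟩ => hst⟩
    obtain ⟨n, hn⟩ := exists_nat_ge t
    exact ⟨n, hst, hn.trans (le_add_self.trans le_self_add)⟩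
  rw [hIoi, iUnion_prod_const]
  exact .iUnion fun n => MeasurableSpace.measurableSet_generateFrom <|
    Or.inl ⟨s, s + n + 1, A, lt_add_of_le_of_pos le_self_add one_pos, hA, rfl⟩

theorem measurableSet_predictableSigma_setOf_le_fst {c : ℝ≥0} (hc : 0 < c) :
    MeasurableSet[predictableSigma F] {p : ℝ≥0 × Ω | c ≤ p.1} := by
  obtain ⟨u, -, hu_lt, hu_tendsto⟩ := exists_seq_strictMono_tendsto' hc
  have hset : {p : ℝ≥0 × Ω | c ≤ p.1} = ⋂ n, Ioi (u n) ×ˢ univ := by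
    ext p
    simp only [mem_ofPred_eq, mem_iInter, mem_prod, mem_Ioi, mem_univ, and_true]
    exact ⟨fun hcp n => (hu_lt n).2.trans_le hcp,
      fun h => le_of_tendsto' hu_tendsto fun n => (h n).le⟩
  rw [hset]
  exact .iInter fun n => measurableSet_predictableSigma_Ioi_prod F MeasurableSet.univ

theorem isPredictable_ite_le {c : ℝ≥0} (hc : 0 < c) (a b : ℝ) :
    _root_.IsPredictable F (fun t (_ : Ω) => if c ≤ t then a else b) :=
  Measurable.ite (measurableSet_predictableSigma_setOf_le_fst F hc) measurable_const
    measurable_const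

end Predictable

section Martingale

variable {ι E : Type*} {mΩ : MeasurableSpace Ω} {μ : Measure Ω}
  [NormedAddCommGroup E] [NormedSpace ℝ E] [CompleteSpace E]

theorem MeasureTheory.Martingale.min_const [LinearOrder ι] {F : Filtration ι mΩ}
    [SigmaFiniteFiltration μ F] {M : ι → Ω → E} (hM : Martingale M F μ) (s : ι) :
    Martingale (fun t => M (min t s)) F μ := by
  refine ⟨fun t => (hM.stronglyAdapted (min t s)).mono (F.mono (min_le_left t s)),
    fun i j hij => ?_⟩
  dsimp only
  rcases le_total i s with his | hsi
  · rw [min_eq_left his]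
    exact hM.condExp_ae_eq (le_min hij his)
  · rw [min_eq_right hsi, min_eq_right (hsi.trans hij), condExp_of_stronglyMeasurable (F.le i)
      ((hM.stronglyAdapted s).mono (F.mono hsi)) (hM.integrable s)]

theorem MeasureTheory.Martingale.isLocalMartingale {F : Filtration ℝ≥0 mΩ}
    [SigmaFiniteFiltration μ F] {M : ℝ≥0 → Ω → ℝ} (hM : Martingale M F μ) :
    IsLocalMartingale μ F M :=
  ⟨fun n _ => n, fun n => isStoppingTime_const F n, fun _ => tendsto_natCast_atTop_atTop,
    fun n => hM.min_const n⟩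

end Martingale

def stepFiltration {ι : Type*} [LinearOrder ι] (mΩ : MeasurableSpace Ω) (c : ι) :
    Filtration ι mΩ where
  seq t := if c ≤ t then mΩ else ⊥
  mono' s t hst := by
    dsimp only
    split_ifs with hs ht
    exacts [le_rfl, absurd (hs.trans hst) ht, bot_le, le_rfl]
  le' t := by
    split_ifs
    exacts [le_rfl, bot_le]

section StepFiltration

variable {ι : Type*} {mΩ : MeasurableSpace Ω}

theorem stepFiltration_apply [LinearOrder ι] (c t : ι) :
    stepFiltration mΩ c t = if c ≤ t then mΩ else ⊥ := rfl

theorem stepFiltration_eq_iInf_Ioi [LinearOrder ι] [DenselyOrdered ι] [NoMaxOrder ι] (c t : ι) :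
    stepFiltration mΩ c t = ⨅ s ∈ Ioi t, stepFiltration mΩ c s := by
  refine le_antisymm (le_iInf₂ fun s hs => (stepFiltration mΩ c).mono hs.le) ?_
  rcases le_or_gt c t with hct | htc
  · obtain ⟨s, hs⟩ := exists_gt t
    calc ⨅ s ∈ Ioi t, stepFiltration mΩ c s ≤ stepFiltration mΩ c s := iInf₂_le s hs
      _ ≤ mΩ := (stepFiltration mΩ c).le s
      _ = stepFiltration mΩ c t := (if_pos hct).symm
  · obtain ⟨s, hts, hsc⟩ := exists_between htc
    calc ⨅ s ∈ Ioi t, stepFiltration mΩ c s ≤ stepFiltration mΩ c s := iInf₂_le s hts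
      _ = stepFiltration mΩ c t := by rw [stepFiltration_apply, stepFiltration_apply,
          if_neg hsc.not_ge, if_neg htc.not_ge]

theorem martingale_ite_le_stepFiltration [LinearOrder ι] {E : Type*} [NormedAddCommGroup E]
    [NormedSpace ℝ E] [CompleteSpace E] {μ : Measure Ω} [IsProbabilityMeasure μ] {g : Ω → E}
    (hg : StronglyMeasurable g) (hg_int : Integrable g μ) (hg_zero : ∫ ω, g ω ∂μ = 0) (c : ι) :
    Martingale (fun t ω => if c ≤ t then g ω else 0) (stepFiltration mΩ c) μ := by
  refine ⟨fun t => ?_, fun i j hij => ?_⟩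
  · by_cases hct : c ≤ t
    · rw [stepFiltration_apply, if_pos hct]
      simpa only [if_pos hct] using hg
    · simpa only [if_neg hct] using stronglyMeasurable_const
  by_cases hci : c ≤ i
  · simp only [stepFiltration_apply, if_pos hci, if_pos (hci.trans hij)]
    rw [condExp_of_stronglyMeasurable le_rfl hg hg_int]
  by_cases hcj : c ≤ j
  · simp only [stepFiltration_apply, if_neg hci, if_pos hcj, condExp_bot, hg_zero]
    rfl
  · simp only [if_neg hcj, if_neg hci]
    exact condExp_zero.eventuallyEq

end StepFiltration

section StepPointProcess

variable {mΩ : MeasurableSpace Ω} {c : ℝ≥0} {A : Set Ω}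

theorem isPointProc_stepFiltration (hc : 0 < c) (hA : MeasurableSet A) :
    IsPointProc (stepFiltration mΩ c) (fun t ω => if ω ∈ A ∧ c ≤ t then 1 else 0) := by
  refine ⟨fun t => ?_, fun ω s t hst => ?_, fun ω => if_neg fun h => h.2.not_gt hc,
    fun ω t => ?_, fun ω t => (Nat.sub_le _ _).trans ?_⟩
  · by_cases hct : c ≤ t
    · rw [stepFiltration_apply, if_pos hct]
      simp only [hct, and_true]
      exact Measurable.ite hA measurable_const measurable_const
    · simp only [hct, and_false, if_false]
      exact measurable_const
  · dsimp only
    split_ifs with hs ht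
    exacts [le_rfl, absurd ⟨hs.1, hs.2.trans hst⟩ ht, Nat.zero_le _, le_rfl]
  · by_cases hω : ω ∈ A
    · simpa only [hω, true_and] using continuousWithinAt_Ici_ite_le c (1 : ℕ) 0 t
    · simpa only [hω, false_and, if_false] using continuousWithinAt_const
  · dsimp only
    split_ifs <;> simp

theorem isCompensatorOf_stepFiltration {μ : Measure Ω} [IsProbabilityMeasure μ] (hc : 0 < c)
    (hA : MeasurableSet A) :
    IsCompensatorOf μ (stepFiltration mΩ c) (fun t _ => if c ≤ t then (μ A).toReal else 0)
      (fun t ω => ((if ω ∈ A ∧ c ≤ t then 1 else 0 : ℕ) : ℝ)) := by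
  refine ⟨isPredictable_ite_le _ hc _ _, fun ω s t hst => ?_, fun ω => if_neg hc.not_ge,
    fun ω t => continuousWithinAt_Ici_ite_le c _ _ t, ?_⟩
  · dsimp only
    split_ifs with hs ht
    exacts [le_rfl, absurd (hs.trans hst) ht, ENNReal.toReal_nonneg, le_rfl]
  have hind : Integrable (A.indicator 1) μ := (integrable_const (1 : ℝ)).indicator hA
  have hg_zero : ∫ ω, (A.indicator 1 ω - μ.real A) ∂μ = 0 := by
    rw [integral_sub hind (integrable_const _),
      integral_indicator_one hA, integral_const, probReal_univ, one_smul, sub_self]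
  have hdiff : (fun t ω => ((if ω ∈ A ∧ c ≤ t then 1 else 0 : ℕ) : ℝ) -
      if c ≤ t then (μ A).toReal else 0) =
        fun t ω => if c ≤ t then A.indicator 1 ω - μ.real A else 0 := by
    ext t ω
    by_cases hct : c ≤ t <;> by_cases hω : ω ∈ A <;> simp [hct, hω, Measure.real]
  rw [hdiff]
  exact Martingale.isLocalMartingale <| martingale_ite_le_stepFiltration
    ((measurable_const.indicator hA).sub measurable_const).stronglyMeasurable
    (hind.sub (integrable_const _)) hg_zero c

end StepPointProcess

/-- Counterexample A.2: there exist a probability space, a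
right-continuous filtration and two point processes with no common jumps whose
compensators have a common jump (at `t = 1`): `Y = 1_A 1_{t≥1}`, `Z = 1_B 1_{t≥1}`
for disjoint events `A`, `B` of positive probability, with compensators
`ℙ[A] 1_{t≥1}` and `ℙ[B] 1_{t≥1}`. -/
theorem exists_no_common_jumps_but_compensators_jump_together :
    ∃ (Ω : Type) (mΩ : MeasurableSpace Ω) (μ : Measure Ω)
      (F : Filtration ℝ≥0 mΩ) (Y Z : ℝ≥0 → Ω → ℕ) (Yp Zp : ℝ≥0 → Ω → ℝ),
      IsProbabilityMeasure μ ∧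
      (∀ t : ℝ≥0, F t = ⨅ s ∈ Set.Ioi t, F s) ∧
      IsPointProc F Y ∧ IsPointProc F Z ∧
      IsCompensatorOf μ F Yp (fun t ω => (Y t ω : ℝ)) ∧
      IsCompensatorOf μ F Zp (fun t ω => (Z t ω : ℝ)) ∧
      (∀ ω (t : ℝ≥0), jmpN (fun u => Y u ω) t * jmpN (fun u => Z u ω) t = 0) ∧
      (∃ A B : Set Ω, MeasurableSet A ∧ MeasurableSet B ∧ Disjoint A B ∧
        0 < μ A ∧ 0 < μ B ∧
        (∀ (t : ℝ≥0) ω, Y t ω = if ω ∈ A ∧ 1 ≤ t then 1 else 0) ∧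
        (∀ (t : ℝ≥0) ω, Z t ω = if ω ∈ B ∧ 1 ≤ t then 1 else 0) ∧
        (∀ (t : ℝ≥0) ω, Yp t ω = if 1 ≤ t then (μ A).toReal else 0) ∧
        (∀ (t : ℝ≥0) ω, Zp t ω = if 1 ≤ t then (μ B).toReal else 0)) ∧
      (∀ ω, jmpR (fun u => Yp u ω) 1 * jmpR (fun u => Zp u ω) 1 ≠ 0) := by
  have hpos : ∀ b : Bool, 0 < (PMF.uniformOfFintype Bool).toMeasure {b} := fun b => by
    rw [PMF.toMeasure_apply_singleton _ _ (measurableSet_singleton b)]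
    simp
  have hdisj : Disjoint ({true} : Set Bool) {false} := by simp
  refine ⟨Bool, _, (PMF.uniformOfFintype Bool).toMeasure, stepFiltration _ 1, _, _, _, _,
    inferInstance, stepFiltration_eq_iInf_Ioi 1,
    isPointProc_stepFiltration one_pos (measurableSet_singleton true),
    isPointProc_stepFiltration one_pos (measurableSet_singleton false),
    isCompensatorOf_stepFiltration one_pos (measurableSet_singleton true),
    isCompensatorOf_stepFiltration one_pos (measurableSet_singleton false),
    jmpN_mul_jmpN_eq_zero_of_disjoint hdisj 1,
    ⟨{true}, {false}, measurableSet_singleton _, measurableSet_singleton _, hdisj,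
      hpos true, hpos false, fun _ _ => rfl, fun _ _ => rfl, fun _ _ => rfl, fun _ _ => rfl⟩,
    fun ω => ?_⟩
  rw [jmpR_ite_le_self one_pos, jmpR_ite_le_self one_pos]
  exact mul_ne_zero (ENNReal.toReal_pos (hpos true).ne' (measure_ne_top _ _)).ne'
    (ENNReal.toReal_pos (hpos false).ne' (measure_ne_top _ _)).ne'
end

section
/- Let M and N be square-integrable martingales on a common probability space, M adapted to a filtration 𝔽 and N adapted to a filtration ℍ, with 𝔽_∞ and ℍ_∞ independent. Then M and N are both martingales with respect to the filtration 𝔾 with 𝒢_t = σ(ℱ_t ∪ ℋ_t), and the product MN is a 𝔾-martingale. -/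
open MeasureTheory ProbabilityTheory
open scoped NNReal

/-! Conditioning on `ℱ_s ⊔ ℋ_s` factorizes over the independent σ-algebras: for `X` measurable
with respect to `ℱ_∞` and `Y` with respect to `ℋ_∞`,
`E[XY | ℱ_s ⊔ ℋ_s] = E[X | ℱ_s] E[Y | ℋ_s]`. Indeed, by independence both sides have integral
`(∫_A X) (∫_B Y)` over every rectangle `A ∩ B` with `A ∈ ℱ_s`, `B ∈ ℋ_s`, and these rectangles form
a π-system generating `ℱ_s ⊔ ℋ_s`. With `X = M_t`, `Y = N_t` this makes `MN` a `𝔾`-martingale;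
replacing `N` or `M` by the constant martingale `1` gives the other two claims. -/

/-- The filtration `𝔾` with `𝒢_t = σ(ℱ_t ∪ ℋ_t)`. -/
def joinFiltration {Ω : Type*} {mΩ : MeasurableSpace Ω}
    (F H : Filtration ℝ≥0 mΩ) : Filtration ℝ≥0 mΩ where
  seq t := F t ⊔ H t
  mono' := fun _ _ hst => sup_le_sup (F.mono hst) (H.mono hst)
  le' := fun t => sup_le (F.le t) (H.le t)

lemma IsPiSystem.image2_inter {α : Type*} {C D : Set (Set α)} (hC : IsPiSystem C)
    (hD : IsPiSystem D) : IsPiSystem (Set.image2 (· ∩ ·) C D) := by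
  rintro _ ⟨A₁, hA₁, B₁, hB₁, rfl⟩ _ ⟨A₂, hA₂, B₂, hB₂, rfl⟩ hne
  rw [Set.inter_inter_inter_comm] at hne ⊢
  exact Set.mem_image2_of_mem (hC _ hA₁ _ hA₂ (hne.mono Set.inter_subset_left))
    (hD _ hB₁ _ hB₂ (hne.mono Set.inter_subset_right))

lemma MeasurableSpace.sup_eq_generateFrom_image2_inter {α : Type*} (m₁ m₂ : MeasurableSpace α) :
    m₁ ⊔ m₂ = generateFrom
      (Set.image2 (· ∩ ·) {s | MeasurableSet[m₁] s} {s | MeasurableSet[m₂] s}) := by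
  refine le_antisymm (sup_le ?_ ?_) (generateFrom_le ?_)
  · exact fun A hA ↦ measurableSet_generateFrom
      ⟨A, hA, Set.univ, MeasurableSet.univ, Set.inter_univ A⟩
  · exact fun B hB ↦ measurableSet_generateFrom
      ⟨Set.univ, MeasurableSet.univ, B, hB, Set.univ_inter B⟩
  · rintro _ ⟨A, hA, B, hB, rfl⟩
    exact (le_sup_left (b := m₂) _ hA).inter (le_sup_right (a := m₁) _ hB)

section

variable {Ω : Type*} {mΩ : MeasurableSpace Ω} {μ : Measure Ω}

lemma setIntegral_eq_of_isPiSystem {E : Type*} [NormedAddCommGroup E] [NormedSpace ℝ E]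
    {m : MeasurableSpace Ω} {S : Set (Set Ω)} (hm : m ≤ mΩ) (h_eq : m = .generateFrom S)
    (hS : IsPiSystem S) (h_univ : Set.univ ∈ S) {f g : Ω → E}
    (hf : Integrable f μ) (hg : Integrable g μ)
    (basic : ∀ s ∈ S, ∫ x in s, f x ∂μ = ∫ x in s, g x ∂μ) :
    ∀ s, MeasurableSet[m] s → ∫ x in s, f x ∂μ = ∫ x in s, g x ∂μ := by
  have h_integral : ∫ x, f x ∂μ = ∫ x, g x ∂μ := by
    simpa only [Measure.restrict_univ] using basic _ h_univ
  intro s hs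
  induction s, hs using MeasurableSpace.induction_on_inter h_eq hS with
  | empty => simp
  | basic s hs => exact basic s hs
  | compl s hs ih =>
    rw [setIntegral_compl (hm s hs) hf, setIntegral_compl (hm s hs) hg, ih, h_integral]
  | iUnion s hdisj hs ih =>
    rw [integral_iUnion (fun i ↦ hm _ (hs i)) hdisj hf.integrableOn,
      integral_iUnion (fun i ↦ hm _ (hs i)) hdisj hg.integrableOn]
    exact tsum_congr ih

namespace ProbabilityTheory

variable {m₁ m₂ : MeasurableSpace Ω}

lemma Indep.indepFun_of_measurable {X Y : Ω → ℝ} (hindep : Indep m₁ m₂ μ)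
    (hX : Measurable[m₁] X) (hY : Measurable[m₂] Y) : IndepFun X Y μ :=
  indep_of_indep_of_le_right (indep_of_indep_of_le_left hindep hX.comap_le) hY.comap_le

lemma Indep.setIntegral_inter_mul (hm₁ : m₁ ≤ mΩ) (hm₂ : m₂ ≤ mΩ) (hindep : Indep m₁ m₂ μ)
    {X Y : Ω → ℝ} (hX : Measurable[m₁] X) (hY : Measurable[m₂] Y)
    {A B : Set Ω} (hA : MeasurableSet[m₁] A) (hB : MeasurableSet[m₂] B) :
    ∫ x in A ∩ B, X x * Y x ∂μ = (∫ x in A, X x ∂μ) * ∫ x in B, Y x ∂μ := by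
  have hA' := hm₁ A hA
  have hB' := hm₂ B hB
  calc ∫ x in A ∩ B, X x * Y x ∂μ
      = ∫ x, A.indicator X x * B.indicator Y x ∂μ := by
        simp_rw [← integral_indicator (hA'.inter hB'), Set.inter_indicator_mul]
    _ = (∫ x, A.indicator X x ∂μ) * ∫ x, B.indicator Y x ∂μ :=
        IndepFun.integral_mul_eq_mul_integral
          (hindep.indepFun_of_measurable (hX.indicator hA) (hY.indicator hB))
          ((hX.mono hm₁ le_rfl).indicator hA').aestronglyMeasurable
          ((hY.mono hm₂ le_rfl).indicator hB').aestronglyMeasurable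
    _ = (∫ x in A, X x ∂μ) * ∫ x in B, Y x ∂μ := by
        rw [integral_indicator hA', integral_indicator hB']

lemma Indep.condExp_sup_mul [IsFiniteMeasure μ] {n₁ n₂ : MeasurableSpace Ω}
    (hm₁ : m₁ ≤ mΩ) (hm₂ : m₂ ≤ mΩ) (hn₁ : n₁ ≤ m₁) (hn₂ : n₂ ≤ m₂) (hindep : Indep m₁ m₂ μ)
    {X Y : Ω → ℝ} (hX : StronglyMeasurable[m₁] X) (hY : StronglyMeasurable[m₂] Y)
    (hXi : Integrable X μ) (hYi : Integrable Y μ) :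
    μ[X * Y | n₁ ⊔ n₂] =ᵐ[μ] μ[X | n₁] * μ[Y | n₂] := by
  have hn : n₁ ⊔ n₂ ≤ mΩ := sup_le (hn₁.trans hm₁) (hn₂.trans hm₂)
  have hX' : StronglyMeasurable[m₁] μ[X | n₁] := stronglyMeasurable_condExp.mono hn₁
  have hY' : StronglyMeasurable[m₂] μ[Y | n₂] := stronglyMeasurable_condExp.mono hn₂
  have hXY : Integrable (X * Y) μ :=
    (hindep.indepFun_of_measurable hX.measurable hY.measurable).integrable_mul hXi hYi
  have hXY' : Integrable (μ[X | n₁] * μ[Y | n₂]) μ :=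
    (hindep.indepFun_of_measurable hX'.measurable hY'.measurable).integrable_mul
      integrable_condExp integrable_condExp
  have h_rect : ∀ s ∈ Set.image2 (· ∩ ·) {A | MeasurableSet[n₁] A} {B | MeasurableSet[n₂] B},
      ∫ x in s, (μ[X | n₁] * μ[Y | n₂]) x ∂μ = ∫ x in s, (X * Y) x ∂μ := by
    rintro _ ⟨A, hA, B, hB, rfl⟩
    simp only [Pi.mul_apply]
    rw [hindep.setIntegral_inter_mul hm₁ hm₂ hX'.measurable hY'.measurable (hn₁ A hA) (hn₂ B hB),
      hindep.setIntegral_inter_mul hm₁ hm₂ hX.measurable hY.measurable (hn₁ A hA) (hn₂ B hB),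
      setIntegral_condExp (hn₁.trans hm₁) hXi hA, setIntegral_condExp (hn₂.trans hm₂) hYi hB]
  refine (ae_eq_condExp_of_forall_setIntegral_eq hn hXY (fun _ _ _ ↦ hXY'.integrableOn)
    (fun s hs _ ↦ ?_) ?_).symm
  · exact setIntegral_eq_of_isPiSystem hn (MeasurableSpace.sup_eq_generateFrom_image2_inter n₁ n₂)
      ((@MeasurableSpace.isPiSystem_measurableSet _ n₁).image2_inter
        (@MeasurableSpace.isPiSystem_measurableSet _ n₂))
      ⟨_, MeasurableSet.univ, _, MeasurableSet.univ, Set.univ_inter _⟩ hXY' hXY h_rect s hs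
  · exact ((stronglyMeasurable_condExp.mono le_sup_left).mul
      (stronglyMeasurable_condExp.mono le_sup_right)).aestronglyMeasurable

end ProbabilityTheory

lemma MeasureTheory.Martingale.mul_of_indep {ι : Type*} [Preorder ι] [IsFiniteMeasure μ]
    {F H : Filtration ι mΩ} (hindep : Indep (⨆ i, F i) (⨆ i, H i) μ) {M N : ι → Ω → ℝ}
    (hM : Martingale M F μ) (hN : Martingale N H μ) :
    Martingale (fun i ω ↦ M i ω * N i ω) (F ⊔ H) μ := by
  refine ⟨fun i ↦ ((hM.stronglyAdapted i).mono le_sup_left).mul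
    ((hN.stronglyAdapted i).mono le_sup_right), fun i j hij ↦ ?_⟩
  calc μ[M j * N j | F i ⊔ H i]
      =ᵐ[μ] μ[M j | F i] * μ[N j | H i] :=
        hindep.condExp_sup_mul (iSup_le F.le) (iSup_le H.le) (le_iSup F i) (le_iSup H i)
          ((hM.stronglyAdapted j).mono (le_iSup F j)) ((hN.stronglyAdapted j).mono (le_iSup H j))
          (hM.integrable j) (hN.integrable j)
    _ =ᵐ[μ] M i * N i := (hM.condExp_ae_eq hij).mul (hN.condExp_ae_eq hij)

end

theorem product_martingale_of_independent_filtrations_general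
    {Ω : Type*} {mΩ : MeasurableSpace Ω} (μ : Measure Ω) [IsProbabilityMeasure μ]
    (F H : Filtration ℝ≥0 mΩ)
    (hindep : Indep (⨆ t : ℝ≥0, (F t : MeasurableSpace Ω))
      (⨆ t : ℝ≥0, (H t : MeasurableSpace Ω)) μ)
    (M N : ℝ≥0 → Ω → ℝ)
    (hM : Martingale M F μ) (hN : Martingale N H μ) :
    Martingale M (joinFiltration F H) μ ∧
    Martingale N (joinFiltration F H) μ ∧
    Martingale (fun t ω => M t ω * N t ω) (joinFiltration F H) μ := by
  have hM_mul_one := hM.mul_of_indep hindep (martingale_const H μ 1)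
  have hone_mul_N := (martingale_const F μ 1).mul_of_indep hindep hN
  simp only [mul_one, one_mul] at hM_mul_one hone_mul_N
  exact ⟨hM_mul_one, hone_mul_N, hM.mul_of_indep hindep hN⟩

/-- if `M` is a square-integrable `𝔽`-martingale and `N` a
square-integrable `ℍ`-martingale with `ℱ_∞` and `ℋ_∞` independent, then `M`, `N` and
the product `MN` are all martingales with respect to `𝒢_t = σ(ℱ_t ∪ ℋ_t)`. -/
theorem product_martingale_of_independent_filtrations
    {Ω : Type*} {mΩ : MeasurableSpace Ω} (μ : Measure Ω) [IsProbabilityMeasure μ]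
    (F H : Filtration ℝ≥0 mΩ)
    (hindep : Indep (⨆ t : ℝ≥0, (F t : MeasurableSpace Ω))
      (⨆ t : ℝ≥0, (H t : MeasurableSpace Ω)) μ)
    (M N : ℝ≥0 → Ω → ℝ)
    (hM : Martingale M F μ) (hN : Martingale N H μ)
    (hM2 : ∀ t : ℝ≥0, MemLp (M t) 2 μ) (hN2 : ∀ t : ℝ≥0, MemLp (N t) 2 μ) :
    Martingale M (joinFiltration F H) μ ∧
    Martingale N (joinFiltration F H) μ ∧
    Martingale (fun t ω => M t ω * N t ω) (joinFiltration F H) μ :=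
  product_martingale_of_independent_filtrations_general μ F H hindep M N hM hN
end

section
/- Let X be a Poisson process with jump times τ₁ < τ₂ < ⋯ and let τ = (τ₁ + τ₂)/2. In the progressive enlargement 𝔾 of the natural filtration of X by the random time τ, the stopping time τ₂ is 𝔾-predictable: the sequence σₙ := (2τ − τ₁) − 1/n ∨ τ₁ (suitably defined on {τ₁ < ∞}) announces τ₂, since τ₂ = 2τ − τ₁ is 𝒢_τ-measurable and τ ≤ τ₂ with τ < τ₂ a.s.; consequently X charges a 𝔾-predictable time and is not quasi-left continuous in 𝔾. -/
open Function Set MeasureTheory Filter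
open scoped NNReal ENNReal

/-!
The first jump time `τ₁ ≤ τ` is a `𝔾`-stopping time, so `τ₁`, and with it `τ₂ = 2τ - τ₁`, is
`𝒢_τ`-measurable. A time that is `𝒢_τ`-measurable and strictly later than
the `𝔾`-stopping time `τ` is announced by the `𝔾`-stopping times `max τ (τ₂ - 1/(n+1))`.
Since `ΔX_{τ₂} = 1` everywhere, `X` jumps at this predictable time.
-/

open Topology

namespace NNReal

theorem tendsto_max_tsub_one_div_add_one {a b : ℝ≥0} (hab : a ≤ b) :
    Tendsto (fun n : ℕ => max a (b - 1 / ((n : ℝ≥0) + 1))) atTop (𝓝 b) := by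
  have h : Tendsto (fun n : ℕ => b - 1 / ((n : ℝ≥0) + 1)) atTop (𝓝 (b - 0)) :=
    tendsto_const_nhds.sub tendsto_one_div_add_atTop_nhds_zero_nat
  rw [tsub_zero] at h
  simpa only [max_eq_right hab] using (tendsto_const_nhds (x := a)).max h

end NNReal

namespace MeasureTheory

variable {Ω ι : Type*} {m : MeasurableSpace Ω}

theorem Adapted.isStoppingTime_of_le_iff [Preorder ι] {β : Type*} [TopologicalSpace β]
    [Preorder β] [ClosedIciTopology β] [MeasurableSpace β] [OpensMeasurableSpace β]
    {f : Filtration ι m} {X : ι → Ω → β} (hX : Adapted f X) {τ : Ω → ι} {b : β}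
    (hτ : ∀ i ω, τ ω ≤ i ↔ b ≤ X i ω) : IsStoppingTime f fun ω => (τ ω : WithTop ι) := by
  intro i
  simp only [WithTop.coe_le_coe, hτ]
  exact hX i measurableSet_Ici

namespace IsStoppingTime

variable [LinearOrder ι] [TopologicalSpace ι] [OrderTopology ι] {f : Filtration ι m}

theorem of_measurable_of_le {τ ρ : Ω → WithTop ι} (hτ : IsStoppingTime f τ)
    (hρ : Measurable[hτ.measurableSpace] ρ) (hle : τ ≤ ρ) : IsStoppingTime f ρ := by
  intro i
  have h := ((hτ.measurableSet _).mp (hρ (measurableSet_Iic (a := (i : WithTop ι))))).2 i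
  rwa [show ρ ⁻¹' Iic (i : WithTop ι) ∩ {ω | τ ω ≤ i} = {ω | ρ ω ≤ i} from
    inter_eq_left.2 fun ω hω => (hle ω).trans hω] at h

variable [SecondCountableTopology ι] [MeasurableSpace ι] [BorelSpace ι] [Nonempty ι]

theorem measurable_coe {τ : Ω → ι} (hτ : IsStoppingTime f fun ω => (τ ω : WithTop ι)) :
    Measurable[hτ.measurableSpace] τ := by
  simpa using hτ.measurable.untopA

theorem measurable_coe_of_le {σ τ : Ω → ι} (hσ : IsStoppingTime f fun ω => (σ ω : WithTop ι))
    (hτ : IsStoppingTime f fun ω => (τ ω : WithTop ι)) (hle : σ ≤ τ) :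
    Measurable[hτ.measurableSpace] σ :=
  hσ.measurable_coe.mono (hσ.measurableSpace_mono hτ fun ω => WithTop.coe_le_coe.2 (hle ω)) le_rfl

end IsStoppingTime

def IsAnnouncingSequence (f : Filtration ℝ≥0 m) (σ : ℕ → Ω → ℝ≥0) (ρ : Ω → ℝ≥0) : Prop :=
  (∀ n, IsStoppingTime f fun ω => ((σ n ω : ℝ≥0) : WithTop ℝ≥0)) ∧
    (∀ ω, Monotone fun n => σ n ω) ∧
    (∀ ω, Tendsto (fun n => σ n ω) atTop (𝓝 (ρ ω))) ∧
    ∀ n ω, σ n ω < ρ ω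

theorem IsStoppingTime.exists_isAnnouncingSequence {f : Filtration ℝ≥0 m} {τ ρ : Ω → ℝ≥0}
    (hτ : IsStoppingTime f fun ω => (τ ω : WithTop ℝ≥0)) (hρ : Measurable[hτ.measurableSpace] ρ)
    (hlt : ∀ ω, τ ω < ρ ω) : ∃ σ, IsAnnouncingSequence f σ ρ := by
  refine ⟨fun n ω => max (τ ω) (ρ ω - 1 / ((n : ℝ≥0) + 1)), fun n => ?_, fun ω k n hkn => ?_,
    fun ω => NNReal.tendsto_max_tsub_one_div_add_one (hlt ω).le, fun n ω => ?_⟩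
  · refine hτ.of_measurable_of_le ?_ fun ω => WithTop.coe_le_coe.2 (le_max_left _ _)
    exact (hτ.measurable_coe.max (hρ.sub_const _)).withTop_coe
  · dsimp only
    gcongr
  · exact max_lt (hlt ω) (tsub_lt_self (pos_of_gt (hlt ω)) (by positivity))

end MeasureTheory

theorem poisson_second_jump_predictable_in_enlargement_general
    {Ω : Type*} {mΩ : MeasurableSpace Ω} (μ : Measure Ω) [IsProbabilityMeasure μ]
    (X : ℝ≥0 → Ω → ℕ)
    -- `τ₁ < τ₂` are the first two jump times of `X`, with `ΔX_{τ₂} = 1`: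
    (τ1 τ2 : Ω → ℝ≥0)
    (hτlt : ∀ ω, 0 < τ1 ω ∧ τ1 ω < τ2 ω)
    (hτ1 : ∀ (t : ℝ≥0) ω, τ1 ω ≤ t ↔ 1 ≤ X t ω)
    (hjump2 : ∀ ω, jmpN (fun u => X u ω) (τ2 ω) = 1)
    -- `𝔾` is the progressive enlargement of the natural filtration of `X` by
    -- `τ = (τ₁+τ₂)/2`: the smallest right-continuous filtration to which `X` is
    -- adapted and for which `τ` is a stopping time:
    (G : Filtration ℝ≥0 mΩ)
    (hGX : ∀ t : ℝ≥0, Measurable[G t] (X t))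
    (hGτ : IsStoppingTime G fun ω => (((τ1 ω + τ2 ω) / 2 : ℝ≥0) : WithTop ℝ≥0)) :
    -- `τ₂` is `𝔾`-predictable: it is announced by a sequence of `𝔾`-stopping times …
    (∃ σ : ℕ → Ω → ℝ≥0,
      (∀ n, IsStoppingTime G (fun ω => ((σ n ω : ℝ≥0) : WithTop ℝ≥0))) ∧
      (∀ ω, Monotone fun n => σ n ω) ∧
      (∀ ω, Tendsto (fun n => σ n ω) atTop (nhds (τ2 ω))) ∧
      (∀ n ω, σ n ω < τ2 ω)) ∧
    -- … and `X` charges `τ₂`, so `X` is not quasi-left continuous in `𝔾`: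
    0 < μ {ω | jmpN (fun u => X u ω) (τ2 ω) ≠ 0} := by
  have hτ1_stop : IsStoppingTime G fun ω => (τ1 ω : WithTop ℝ≥0) :=
    Adapted.isStoppingTime_of_le_iff hGX hτ1
  have hτ1_meas : Measurable[hGτ.measurableSpace] τ1 :=
    hτ1_stop.measurable_coe_of_le hGτ fun ω => (left_lt_add_div_two.2 (hτlt ω).2).le
  have hτ2_meas : Measurable[hGτ.measurableSpace] τ2 := by
    convert (hGτ.measurable_coe.const_mul 2).sub hτ1_meas using 1
    funext ω
    rw [Pi.sub_apply, mul_div_cancel₀ _ two_ne_zero, add_tsub_cancel_left]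
  refine ⟨hGτ.exists_isAnnouncingSequence hτ2_meas fun ω => add_div_two_lt_right.2 (hτlt ω).2, ?_⟩
  simp [hjump2]

/-- Counterexample 4.10: let `X` be a Poisson process with jump times
`τ₁ < τ₂ < ⋯` and `τ = (τ₁ + τ₂)/2`. In the progressive enlargement `𝔾` of the natural
filtration of `X` by `τ` (the smallest right-continuous filtration to which `X` is
adapted and making `τ` a stopping time), the time `τ₂` is `𝔾`-predictable: it admits an
announcing sequence of `𝔾`-stopping times; consequently `X` charges a `𝔾`-predictable
time (`ΔX_{τ₂} = 1`) and is not quasi-left continuous in `𝔾`. -/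
theorem poisson_second_jump_predictable_in_enlargement
    {Ω : Type*} {mΩ : MeasurableSpace Ω} (μ : Measure Ω) [IsProbabilityMeasure μ]
    (X : ℝ≥0 → Ω → ℕ) (lam : ℝ) (hlam : 0 < lam)
    -- `X` is a point process with Poisson marginals of rate `lam`:
    (hmeas : ∀ t : ℝ≥0, Measurable (X t))
    (hmono : ∀ ω, Monotone fun t => X t ω)
    (h0 : ∀ ω, X 0 ω = 0)
    (hrc : ∀ ω (t : ℝ≥0), ContinuousWithinAt (fun u => X u ω) (Set.Ici t) t)
    (hjumps : ∀ ω (t : ℝ≥0), jmpN (fun u => X u ω) t ≤ 1)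
    (hpoisson : ∀ s t : ℝ≥0, s ≤ t → ∀ k : ℕ,
      μ {ω | X t ω - X s ω = k}
        = ENNReal.ofReal (Real.exp (-(lam * ((t : ℝ) - s))) *
            (lam * ((t : ℝ) - s)) ^ k / Nat.factorial k))
    -- `τ₁ < τ₂` are the first two jump times of `X`, with `ΔX_{τ₂} = 1`:
    (τ1 τ2 : Ω → ℝ≥0)
    (hτlt : ∀ ω, 0 < τ1 ω ∧ τ1 ω < τ2 ω)
    (hτ1 : ∀ (t : ℝ≥0) ω, τ1 ω ≤ t ↔ 1 ≤ X t ω)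
    (hτ2 : ∀ (t : ℝ≥0) ω, τ2 ω ≤ t ↔ 2 ≤ X t ω)
    (hjump2 : ∀ ω, jmpN (fun u => X u ω) (τ2 ω) = 1)
    -- `𝔾` is the progressive enlargement of the natural filtration of `X` by
    -- `τ = (τ₁+τ₂)/2`: the smallest right-continuous filtration to which `X` is
    -- adapted and for which `τ` is a stopping time:
    (G : Filtration ℝ≥0 mΩ)
    (hGrc : ∀ t : ℝ≥0, G t = ⨅ s ∈ Set.Ioi t, G s)
    (hGX : ∀ t : ℝ≥0, Measurable[G t] (X t))
    (hGτ : IsStoppingTime G fun ω => (((τ1 ω + τ2 ω) / 2 : ℝ≥0) : WithTop ℝ≥0))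
    (hGmin : ∀ G' : Filtration ℝ≥0 mΩ,
      (∀ t : ℝ≥0, G' t = ⨅ s ∈ Set.Ioi t, G' s) →
      (∀ t : ℝ≥0, Measurable[G' t] (X t)) →
      IsStoppingTime G' (fun ω => (((τ1 ω + τ2 ω) / 2 : ℝ≥0) : WithTop ℝ≥0)) →
      ∀ t : ℝ≥0, G t ≤ G' t) :
    -- `τ₂` is `𝔾`-predictable: it is announced by a sequence of `𝔾`-stopping times …
    (∃ σ : ℕ → Ω → ℝ≥0,
      (∀ n, IsStoppingTime G (fun ω => ((σ n ω : ℝ≥0) : WithTop ℝ≥0))) ∧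
      (∀ ω, Monotone fun n => σ n ω) ∧
      (∀ ω, Tendsto (fun n => σ n ω) atTop (nhds (τ2 ω))) ∧
      (∀ n ω, σ n ω < τ2 ω)) ∧
    -- … and `X` charges `τ₂`, so `X` is not quasi-left continuous in `𝔾`:
    0 < μ {ω | jmpN (fun u => X u ω) (τ2 ω) ≠ 0} :=
  poisson_second_jump_predictable_in_enlargement_general μ X τ1 τ2 hτlt hτ1 hjump2 G hGX hGτ
end
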